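/- Let (X, 𝒰) be a uniform space. Then the topology on ℱ(X) induced by the sendograph uniformity 𝒰_S is coarser than the topology induced by the Skorokhod uniformity 𝒰_0, which in turn is coarser than the topology induced by the level-wise uniformity 𝒰_∞: τ(𝒰_S) ⊆ τ(𝒰_0) ⊆ τ(𝒰_∞). -/

import Mathlib

open Set Filter Topology
open scoped Uniformity

/-- The α-cut of a fuzzy set: `{x | α ≤ u x}` for `α ≠ 0`, and the support
(closure of `{x | 0 < u x}`) for `α = 0`. -/
noncomputable def fuzzyCut {X : Type*} [TopologicalSpace X] (u : X → ℝ) (α : ℝ) : Set X :=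
  if α = 0 then closure {x | 0 < u x} else {x | α ≤ u x}

/-- `u` belongs to `ℱ(X)`: a normal upper semicontinuous `[0,1]`-valued fuzzy set
with compact support. -/
structure IsFuzzySet {X : Type*} [TopologicalSpace X] (u : X → ℝ) : Prop where
  mem_Icc : ∀ x, u x ∈ Set.Icc (0:ℝ) 1
  usc : UpperSemicontinuous u
  normal : ∃ x, u x = 1
  compact_supp : IsCompact (closure {x | 0 < u x})

/-- The Zadeh extension of `f`: `x ↦ sup {u z : f z = x}` (and `0` when the
preimage is empty, since `sSup ∅ = 0` in `ℝ`). -/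
noncomputable def zadeh {X : Type*} (f : X → X) (u : X → ℝ) : X → ℝ :=
  fun x => sSup (u '' (f ⁻¹' {x}))

/-- `W(A) = ⋃ a ∈ A, W(a)` where `W(a) = {y | (a, y) ∈ W}`. -/
def ballImage {Y : Type*} (W : Set (Y × Y)) (A : Set Y) : Set Y :=
  {y | ∃ a ∈ A, (a, y) ∈ W}

/-- The Hausdorff entourage relation `𝒦[W]`: `(A,B) ∈ 𝒦[W]` iff `A ⊆ W(B)` and `B ⊆ W(A)`. -/
def KRel {Y : Type*} (W : Set (Y × Y)) (A B : Set Y) : Prop :=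
  A ⊆ ballImage W B ∧ B ⊆ ballImage W A

/-- The level-wise entourage relation `ℱ[W]`: `(u_α, v_α) ∈ 𝒦[W]` for all `α ∈ [0,1]`. -/
def FRel {X : Type*} [TopologicalSpace X] (W : Set (X × X)) (u v : X → ℝ) : Prop :=
  ∀ α ∈ Set.Icc (0:ℝ) 1, KRel W (fuzzyCut u α) (fuzzyCut v α)

/-- The Skorokhod entourage relation `G[W, ε]`: there is an increasing homeomorphism `t`
of `[0,1]` with `‖t‖ < ε` and `(u_α, v_{t α}) ∈ 𝒦[W]` for all `α ∈ [0,1]`. -/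
def SkoRel {X : Type*} [TopologicalSpace X] (W : Set (X × X)) (ε : ℝ) (u v : X → ℝ) : Prop :=
  ∃ t : ℝ → ℝ, StrictMonoOn t (Set.Icc 0 1) ∧ t 0 = 0 ∧ t 1 = 1 ∧
    Set.MapsTo t (Set.Icc 0 1) (Set.Icc 0 1) ∧ Set.SurjOn t (Set.Icc 0 1) (Set.Icc 0 1) ∧
    (∀ α ∈ Set.Icc (0:ℝ) 1, |t α - α| < ε) ∧
    (∀ α ∈ Set.Icc (0:ℝ) 1, KRel W (fuzzyCut u α) (fuzzyCut v (t α)))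

/-- The sendograph of `u`: `end(u) ∩ (u₀ × [0,1])`. -/
noncomputable def send {X : Type*} [TopologicalSpace X] (u : X → ℝ) : Set (X × ℝ) :=
  {p | p.1 ∈ fuzzyCut u 0 ∧ p.2 ∈ Set.Icc (0:ℝ) 1 ∧ p.2 ≤ u p.1}

/-- The product entourage `U × V_ε` on `X × [0,1]`. -/
def prodEnt {X : Type*} (U : Set (X × X)) (ε : ℝ) : Set ((X × ℝ) × (X × ℝ)) :=
  {p | (p.1.1, p.2.1) ∈ U ∧ |p.1.2 - p.2.2| < ε}

/-- The sendograph entourage relation `S[U, ε]`. -/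
noncomputable def SendRel {X : Type*} [TopologicalSpace X] (U : Set (X × X)) (ε : ℝ)
    (u v : X → ℝ) : Prop :=
  KRel (prodEnt U ε) (send u) (send v)

/-- `u_{α⁺} = closure (⋃ β ∈ (α, 1], u_β)`, the right limit of the level map. -/
noncomputable def cutPlus {X : Type*} [TopologicalSpace X] (u : X → ℝ) (α : ℝ) : Set X :=
  closure (⋃ β ∈ Set.Ioc α 1, fuzzyCut u β)

/-- `B` belongs to the Vietoris basic open set `⟨V 0, …, V (k-1)⟩`. -/
def inVietoris {Y : Type*} (B : Set Y) (k : ℕ) (V : Fin k → Set Y) : Prop :=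
  B ⊆ (⋃ i, V i) ∧ ∀ i, (B ∩ V i).Nonempty

section FuzzySets

variable {X : Type*} [TopologicalSpace X] {u v : X → ℝ}

lemma fuzzyCut_zero (u : X → ℝ) : fuzzyCut u 0 = closure {x | 0 < u x} := if_pos rfl

lemma fuzzyCut_of_ne_zero {α : ℝ} (hα : α ≠ 0) : fuzzyCut u α = {x | α ≤ u x} := if_neg hα

lemma mk_mem_send {x : X} {α : ℝ} (hα : α ∈ Ioc 0 1) (hx : x ∈ fuzzyCut u α) :
    (x, α) ∈ send u := by
  rw [fuzzyCut_of_ne_zero hα.1.ne'] at hx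
  refine ⟨?_, Ioc_subset_Icc_self hα, hx⟩
  rw [fuzzyCut_zero]
  exact subset_closure (hα.1.trans_le hx)

lemma send_subset_ballImage_prodEnt {U : Set (X × X)} {ε : ℝ} (hε : 0 < ε)
    (hv : ∀ x, 0 ≤ v x) (h0 : fuzzyCut u 0 ⊆ ballImage U (fuzzyCut v 0))
    (hpos : ∀ β ∈ Ioc (0:ℝ) 1, ∃ γ ∈ Ioc (0:ℝ) 1, |γ - β| < ε ∧
      fuzzyCut u β ⊆ ballImage U (fuzzyCut v γ)) :
    send u ⊆ ballImage (prodEnt U ε) (send v) := by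
  rintro ⟨x, β⟩ ⟨hx, hβ, hβu⟩
  rcases hβ.1.eq_or_lt with rfl | hβ0
  · obtain ⟨a, ha, hax⟩ := h0 hx
    exact ⟨(a, 0), ⟨ha, ⟨le_rfl, zero_le_one⟩, hv a⟩, hax, by simpa using hε⟩
  · have hxβ : x ∈ fuzzyCut u β := by rwa [fuzzyCut_of_ne_zero hβ0.ne']
    obtain ⟨γ, hγ, hγβ, hsub⟩ := hpos β ⟨hβ0, hβ.2⟩
    obtain ⟨a, ha, hax⟩ := hsub hxβ
    exact ⟨(a, γ), mk_mem_send hγ ha, hax, hγβ⟩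

/-- The time change `t` pairs the level `β > 0` of `u` with the level `t β > 0` of `v`, and
the inverse pairing comes from surjectivity of `t`; level `0` is fixed since `t 0 = 0`. -/
theorem sendRel_of_skoRel {U : Set (X × X)} {ε : ℝ} (hu : ∀ x, 0 ≤ u x) (hv : ∀ x, 0 ≤ v x)
    (h : SkoRel U ε u v) : SendRel U ε u v := by
  obtain ⟨t, ht, ht0, -, htm, hts, htε, htK⟩ := h
  have hI0 : (0:ℝ) ∈ Icc 0 1 := ⟨le_rfl, zero_le_one⟩
  have hε : 0 < ε := by simpa [ht0] using htε 0 hI0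
  have hK0 : KRel U (fuzzyCut u 0) (fuzzyCut v 0) := by simpa [ht0] using htK 0 hI0
  refine ⟨send_subset_ballImage_prodEnt hε hv hK0.1 fun β hβ => ?_,
    send_subset_ballImage_prodEnt hε hu hK0.2 fun γ hγ => ?_⟩
  · have hβI := Ioc_subset_Icc_self hβ
    exact ⟨t β, ⟨ht0 ▸ ht hI0 hβI hβ.1, (htm hβI).2⟩, htε β hβI, (htK β hβI).1⟩
  · obtain ⟨α, hαI, rfl⟩ := hts (Ioc_subset_Icc_self hγ)
    have hα0 : α ≠ 0 := by rintro rfl; exact hγ.1.ne' ht0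
    exact ⟨α, ⟨hαI.1.lt_of_ne' hα0, hαI.2⟩, by rw [abs_sub_comm]; exact htε α hαI,
      (htK α hαI).2⟩

theorem skoRel_of_fRel {U : Set (X × X)} {ε : ℝ} (hε : 0 < ε) (h : FRel U u v) :
    SkoRel U ε u v :=
  ⟨id, strictMonoOn_id, rfl, rfl, mapsTo_id _, surjOn_id _, fun _ _ => by simpa using hε, h⟩

end FuzzySets

/-- The inclusions of topologies are stated through the bases: every basic ball of the coarser
uniformity around `u` contains a basic ball of the finer one around `u`. -/
theorem stmt14 {X : Type*} [UniformSpace X] :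
    (∀ u : X → ℝ, IsFuzzySet u → ∀ U ∈ 𝓤 X, ∀ ε > (0:ℝ), ∃ V ∈ 𝓤 X, ∃ δ > (0:ℝ),
      ∀ v : X → ℝ, IsFuzzySet v → SkoRel V δ u v → SendRel U ε u v) ∧
    (∀ u : X → ℝ, IsFuzzySet u → ∀ U ∈ 𝓤 X, ∀ ε > (0:ℝ), ∃ V ∈ 𝓤 X,
      ∀ v : X → ℝ, IsFuzzySet v → FRel V u v → SkoRel U ε u v) := by
  refine ⟨fun u hu U hU ε hε => ⟨U, hU, ε, hε, fun v hv h => ?_⟩,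
    fun u _ U hU ε hε => ⟨U, hU, fun v _ h => skoRel_of_fRel hε h⟩⟩
  exact sendRel_of_skoRel (fun x => (hu.mem_Icc x).1) (fun x => (hv.mem_Icc x).1) h
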